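/- Let c ∈ ℝ \ {0}. For every integer l ≥ 1 one has 2 (d₁ d₂/(a+b)) · (b^{2l+2} − a^{2l+2}) · (b^{2l+1} − a^{2l+1}) + 2 (d₁ a^{2l} + d₂ b^{2l}) (d₁ a^{2l+2} + d₂ b^{2l+2}) − (d₁ a^{2l+1} + d₂ b^{2l+1})² ≠ 0. -/

import Mathlib

noncomputable def aDP (t : ℝ) : ℝ := (3 + Real.sqrt 5) / (2 * t)
noncomputable def bDP (t : ℝ) : ℝ := (3 - Real.sqrt 5) / (2 * t)
noncomputable def d1DP (c : ℝ) : ℝ := -(3 + Real.sqrt 5) / (18 * c)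
noncomputable def d2DP (c : ℝ) : ℝ := (-3 + Real.sqrt 5) / (18 * c)

/-!
Writing `d₁ = k a`, `d₂ = k b` with `k = -1/(9t²)`, the expression is `k²` times a form in `a, b`
which, for `n = 2l + 1`, equals
`a^(2n+2) + b^(2n+2) + 2 (ab)^n (a - b)² + 2ab (a^(2n+1) + b^(2n+1)) / (a + b)`.
Since `ab = 1/t² > 0`, the numbers `a` and `b` have the same sign, so every summand is nonnegative
and the first one is positive.
-/

section Field

variable {K : Type*} [Field K]

def powSumForm (a b : K) (n : ℕ) : K :=
  2 * (a * b / (a + b)) * (b ^ (n + 1) - a ^ (n + 1)) * (b ^ n - a ^ n) +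
    2 * (a ^ n + b ^ n) * (a ^ (n + 2) + b ^ (n + 2)) - (a ^ (n + 1) + b ^ (n + 1)) ^ 2

theorem powSumForm_eq {a b : K} (hab : a + b ≠ 0) (n : ℕ) :
    powSumForm a b n = (a ^ (n + 1)) ^ 2 + (b ^ (n + 1)) ^ 2 + 2 * (a * b) ^ n * (a - b) ^ 2 +
      2 * (a * b) * ((a ^ (2 * n + 1) + b ^ (2 * n + 1)) / (a + b)) := by
  unfold powSumForm
  field_simp
  ring

end Field

section OrderedField

variable {K : Type*} [Field K] [LinearOrder K] [IsStrictOrderedRing K]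

theorem pow_add_pow_div_add_pos {a b : K} (hab : 0 < a * b) {j : ℕ} (hj : Odd j) :
    0 < (a ^ j + b ^ j) / (a + b) := by
  rcases mul_pos_iff.mp hab with ⟨ha, hb⟩ | ⟨ha, hb⟩
  · positivity
  · exact div_pos_of_neg_of_neg (by linarith [hj.pow_neg ha, hj.pow_neg hb]) (by linarith)

theorem powSumForm_pos {a b : K} (hab : 0 < a * b) (n : ℕ) : 0 < powSumForm a b n := by
  have ha : a ≠ 0 := left_ne_zero_of_mul hab.ne'
  have hsum : a + b ≠ 0 := by
    rcases mul_pos_iff.mp hab with ⟨ha, hb⟩ | ⟨ha, hb⟩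
    · exact (add_pos ha hb).ne'
    · exact (add_neg ha hb).ne
  rw [powSumForm_eq hsum]
  have := pow_add_pow_div_add_pos hab (odd_two_mul_add_one n)
  positivity

theorem weighted_powSumForm_pos {a b k d₁ d₂ : K} (hab : 0 < a * b) (hk : k ≠ 0)
    (hd₁ : d₁ = k * a) (hd₂ : d₂ = k * b) (m : ℕ) :
    0 < 2 * (d₁ * d₂ / (a + b)) * (b ^ (m + 2) - a ^ (m + 2)) * (b ^ (m + 1) - a ^ (m + 1)) +
        2 * (d₁ * a ^ m + d₂ * b ^ m) * (d₁ * a ^ (m + 2) + d₂ * b ^ (m + 2)) -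
        (d₁ * a ^ (m + 1) + d₂ * b ^ (m + 1)) ^ 2 := by
  subst hd₁ hd₂
  have hk2 : 0 < k ^ 2 := by positivity
  convert mul_pos hk2 (powSumForm_pos hab (m + 1)) using 1
  unfold powSumForm
  ring

end OrderedField

theorem aDP_mul_bDP (t : ℝ) : aDP t * bDP t = 1 / t ^ 2 := by
  have h4 : (3 + Real.sqrt 5) * (3 - Real.sqrt 5) = 4 := by
    linear_combination -Real.sq_sqrt (show (0 : ℝ) ≤ 5 by norm_num)
  unfold aDP bDP
  rw [div_mul_div_comm, h4]
  ring

theorem d1DP_eq {c t : ℝ} (ht : t ^ 3 = c) : d1DP c = -1 / (9 * t ^ 2) * aDP t := by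
  unfold d1DP aDP
  rw [← ht]
  ring

theorem d2DP_eq {c t : ℝ} (ht : t ^ 3 = c) : d2DP c = -1 / (9 * t ^ 2) * bDP t := by
  unfold d2DP bDP
  rw [← ht]
  ring

theorem stmt17_general (c t : ℝ) (hc : c ≠ 0) (ht : t ^ 3 = c) (l : ℕ) :
    2 * (d1DP c * d2DP c / (aDP t + bDP t)) *
          (bDP t ^ (2 * l + 2) - aDP t ^ (2 * l + 2)) *
          (bDP t ^ (2 * l + 1) - aDP t ^ (2 * l + 1)) +
        2 * (d1DP c * aDP t ^ (2 * l) + d2DP c * bDP t ^ (2 * l)) *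
          (d1DP c * aDP t ^ (2 * l + 2) + d2DP c * bDP t ^ (2 * l + 2)) -
        (d1DP c * aDP t ^ (2 * l + 1) + d2DP c * bDP t ^ (2 * l + 1)) ^ 2 ≠ 0 := by
  have ht0 : t ≠ 0 := by
    rintro rfl
    exact hc (by simp [← ht])
  have hab : 0 < aDP t * bDP t := by
    rw [aDP_mul_bDP]
    positivity
  have hk : -1 / (9 * t ^ 2) ≠ 0 := by positivity
  exact (weighted_powSumForm_pos hab hk (d1DP_eq ht) (d2DP_eq ht) (2 * l)).ne'

/-- For every `l ≥ 1`,
`2 (d₁d₂/(a+b)) (b^{2l+2} − a^{2l+2}) (b^{2l+1} − a^{2l+1})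
  + 2 (d₁ a^{2l} + d₂ b^{2l}) (d₁ a^{2l+2} + d₂ b^{2l+2})
  − (d₁ a^{2l+1} + d₂ b^{2l+1})² ≠ 0`,
where `t` is the real cube root of `c ≠ 0`. -/
theorem stmt17 (c t : ℝ) (hc : c ≠ 0) (ht : t ^ 3 = c) (l : ℕ) (hl : 1 ≤ l) :
    2 * (d1DP c * d2DP c / (aDP t + bDP t)) *
          (bDP t ^ (2 * l + 2) - aDP t ^ (2 * l + 2)) *
          (bDP t ^ (2 * l + 1) - aDP t ^ (2 * l + 1)) +
        2 * (d1DP c * aDP t ^ (2 * l) + d2DP c * bDP t ^ (2 * l)) *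
          (d1DP c * aDP t ^ (2 * l + 2) + d2DP c * bDP t ^ (2 * l + 2)) -
        (d1DP c * aDP t ^ (2 * l + 1) + d2DP c * bDP t ^ (2 * l + 1)) ^ 2 ≠ 0 :=
  stmt17_general c t hc ht l
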